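/- arXiv:1609.07269 — 7 statements merged into one kernel-verified Lean document; each statement's English description precedes it below -/
import Mathlib

section
/- For every δ > 0 with τ−2+δ < 1 there exists k₀ such that whenever y₀ = k ≥ k₀ (equivalently, whenever B(log k)^{γ−1} ≤ δ), the recursively defined sequence satisfies, for all i ≥ 0, k^{(1/(τ−2+δ))^i} ≤ y_i ≤ k^{(1/(τ−2))^i}. -/
/-! Once `log x ≥ (B/δ)^(1/(1-γ))`, the perturbation `B (log x)^(γ-1)` lies in `[0, δ]`, so every
exponent `1/(τ-2+B (log y_i)^(γ-1))` lies between `a = 1/(τ-2+δ) ≥ 1` and `b = 1/(τ-2)`.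
Since `a ≥ 1` the lower bound keeps `y_i ≥ k` above the threshold, and induction on `i` gives
`k^(a^i) ≤ y_i ≤ k^(b^i)`. -/

open Real

lemma mul_log_rpow_sub_one_le {B δ γ x : ℝ} (hB : 0 < B) (hδ : 0 < δ) (hγ : γ < 1)
    (hx : (B / δ) ^ (1 - γ)⁻¹ ≤ log x) : B * log x ^ (γ - 1) ≤ δ := by
  have hBδ : 0 < B / δ := div_pos hB hδ
  have hγ1 : 1 - γ ≠ 0 := (sub_pos.mpr hγ).ne'
  have hthreshold : ((B / δ) ^ (1 - γ)⁻¹) ^ (γ - 1) = δ / B := by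
    rw [← rpow_mul hBδ.le, show (1 - γ)⁻¹ * (γ - 1) = -1 by field_simp; ring, rpow_neg_one,
      inv_div]
  calc B * log x ^ (γ - 1)
      ≤ B * ((B / δ) ^ (1 - γ)⁻¹) ^ (γ - 1) := by
        refine mul_le_mul_of_nonneg_left ?_ hB.le
        exact rpow_le_rpow_of_nonpos (by positivity) hx (by linarith)
    _ = δ := by rw [hthreshold]; field_simp

lemma rpow_mul_le_rpow_of_rpow_le {k s a e y : ℝ} (hk : 1 ≤ k) (hs : 0 ≤ s) (he : 0 ≤ e)
    (hae : a ≤ e) (h : k ^ s ≤ y) : k ^ (s * a) ≤ y ^ e :=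
  calc k ^ (s * a) ≤ k ^ (s * e) := rpow_le_rpow_of_exponent_le hk (by gcongr)
    _ = (k ^ s) ^ e := rpow_mul (by linarith) s e
    _ ≤ y ^ e := rpow_le_rpow (by positivity) h he

lemma rpow_le_rpow_mul_of_le_rpow {k s b e y : ℝ} (hk : 1 ≤ k) (hs : 0 ≤ s) (hy : 0 ≤ y)
    (he : 0 ≤ e) (heb : e ≤ b) (h : y ≤ k ^ s) : y ^ e ≤ k ^ (s * b) :=
  calc y ^ e ≤ (k ^ s) ^ e := rpow_le_rpow hy h he
    _ = k ^ (s * e) := (rpow_mul (by linarith) s e).symm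
    _ ≤ k ^ (s * b) := rpow_le_rpow_of_exponent_le hk (by gcongr)

theorem rpow_pow_le_and_le_rpow_pow_of_rpow_recurrence {k a b : ℝ} {f : ℝ → ℝ} {y : ℕ → ℝ}
    (ha : 1 ≤ a) (hk : 1 ≤ k) (hf : ∀ x, k ≤ x → a ≤ f x ∧ f x ≤ b) (h0 : y 0 = k)
    (hy : ∀ i, y (i + 1) = y i ^ f (y i)) (i : ℕ) : k ^ (a ^ i) ≤ y i ∧ y i ≤ k ^ (b ^ i) := by
  have hb : 1 ≤ b := ha.trans ((hf k le_rfl).1.trans (hf k le_rfl).2)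
  induction i with
  | zero => simp [h0]
  | succ n ih =>
    obtain ⟨hlo, hhi⟩ := ih
    have hky : k ≤ y n := (self_le_rpow_of_one_le hk (one_le_pow₀ ha)).trans hlo
    obtain ⟨hae, heb⟩ := hf _ hky
    rw [hy, pow_succ, pow_succ]
    exact ⟨rpow_mul_le_rpow_of_rpow_le hk (by positivity) (by linarith) hae hlo,
      rpow_le_rpow_mul_of_le_rpow hk (by positivity) (by linarith) (by linarith) heb hhi⟩

/-- For every `δ > 0` with `τ - 2 + δ < 1` there exists `k₀` such that whenever
`y 0 = k ≥ k₀`, the recursively defined sequence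
`y (i+1) = y i ^ (1 / (τ - 2 + B * (log (y i)) ^ (γ - 1)))` satisfies, for all `i ≥ 0`,
`k ^ ((1/(τ-2+δ))^i) ≤ y i ≤ k ^ ((1/(τ-2))^i)`. -/
theorem stmt0 (τ γ B : ℝ) (hτ : 2 < τ ∧ τ < 3) (hγ : 0 < γ ∧ γ < 1) (hB : 0 < B)
    (δ : ℝ) (hδ : 0 < δ) (hδ' : τ - 2 + δ < 1) :
    ∃ k₀ : ℝ, 1 < k₀ ∧ ∀ k : ℝ, k₀ ≤ k →
      ∀ y : ℕ → ℝ, y 0 = k →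
        (∀ i : ℕ, y (i + 1) = (y i) ^ (1 / (τ - 2 + B * (Real.log (y i)) ^ (γ - 1)))) →
        ∀ i : ℕ, k ^ ((1 / (τ - 2 + δ)) ^ i) ≤ y i ∧ y i ≤ k ^ ((1 / (τ - 2)) ^ i) := by
  have hτ2 : 0 < τ - 2 := by linarith [hτ.1]
  have hL : 0 < (B / δ) ^ (1 - γ)⁻¹ := by positivity
  refine ⟨exp ((B / δ) ^ (1 - γ)⁻¹), one_lt_exp_iff.mpr hL, fun k hk y h0 hy => ?_⟩
  have hk1 : 1 ≤ k := (one_lt_exp_iff.mpr hL).le.trans hk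
  have hexponent : ∀ x, k ≤ x → 1 / (τ - 2 + δ) ≤ 1 / (τ - 2 + B * log x ^ (γ - 1)) ∧
      1 / (τ - 2 + B * log x ^ (γ - 1)) ≤ 1 / (τ - 2) := by
    intro x hx
    have hlog : (B / δ) ^ (1 - γ)⁻¹ ≤ log x := (le_log_iff_exp_le (by linarith)).mpr (hk.trans hx)
    have hpert_nonneg : 0 ≤ B * log x ^ (γ - 1) := by
      have := hL.trans_le hlog
      positivity
    have hpert_le : B * log x ^ (γ - 1) ≤ δ := mul_log_rpow_sub_one_le hB hδ hγ.2 hlog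
    exact ⟨one_div_le_one_div_of_le (by linarith) (by linarith),
      one_div_le_one_div_of_le hτ2 (by linarith)⟩
  exact rpow_pow_le_and_le_rpow_pow_of_rpow_recurrence
    (f := fun x => 1 / (τ - 2 + B * log x ^ (γ - 1))) (one_le_one_div (by linarith) hδ'.le)
    hk1 hexponent h0 hy
end

section
/- For every C > 0 and every B > 2C there exists k₀ such that for all y₀ = k ≥ k₀ and all i ≥ 0 the recursively defined sequence satisfies y_{i+1}^{2−τ−C(log y_{i+1})^{γ−1}} · y_i ≥ exp( C (log y_i)^γ ). -/
/-!
Write `L = log yᵢ` and `D = τ - 2 + B L^(γ-1)`, so that `log yᵢ₊₁ = L / D`. After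
taking logarithms the claim reads `(2 - τ - C (L/D)^(γ-1)) (L/D) + L ≥ C L^γ`, and since
`2 - τ + D = B L^(γ-1)` the left side equals `L^γ (B/D - C/D^γ)`. For large `L` we
have `0 < D ≤ 1`, hence `D ≤ D^γ` and `B/D - C/D^γ ≥ (B - C)/D ≥ B - C ≥ C`. Largeness
of `L` is inherited along the sequence, because `D ≤ 1` makes `log yᵢ` nondecreasing.
-/

open Real Filter Topology

lemma le_div_sub_div_rpow {B C D γ : ℝ} (hC : 0 ≤ C) (hB : 2 * C ≤ B) (hD₀ : 0 < D)
    (hD₁ : D ≤ 1) (hγ : γ ≤ 1) : C ≤ B / D - C / D ^ γ := by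
  have hDγ : D ≤ D ^ γ := by simpa using rpow_le_rpow_of_exponent_ge hD₀ hD₁ hγ
  have h₁ : C / D ^ γ ≤ C / D := div_le_div_of_nonneg_left hC hD₀ hDγ
  have h₂ : B - C ≤ (B - C) / D := le_div_self (by linarith) hD₀ hD₁
  have h₃ : (B - C) / D = B / D - C / D := sub_div B C D
  linarith

lemma sub_mul_div_add_eq {a B C D L γ : ℝ} (hL : 0 < L) (hD : 0 < D)
    (h : a + D = B * L ^ (γ - 1)) :
    (a - C * (L / D) ^ (γ - 1)) * (L / D) + L = L ^ γ * (B / D - C / D ^ γ) := by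
  have h₁ : (L / D) ^ (γ - 1) * (L / D) = L ^ γ / D ^ γ := by
    rw [← rpow_add_one (div_pos hL hD).ne', sub_add_cancel, div_rpow hL.le hD.le]
  have h₂ : L ^ (γ - 1) * L = L ^ γ := by
    rw [← rpow_add_one hL.ne', sub_add_cancel]
  calc (a - C * (L / D) ^ (γ - 1)) * (L / D) + L
      = (a + D) * (L / D) - C * ((L / D) ^ (γ - 1) * (L / D)) := by field_simp; ring
    _ = L ^ γ * (B / D - C / D ^ γ) := by rw [h, h₁, ← h₂]; ring

section

variable {τ γ B C : ℝ}

lemma eventually_exponent_mem_Ioc (hτ : 2 < τ ∧ τ < 3) (hγ : γ < 1) (hB : 0 < B) :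
    ∀ᶠ L in atTop, 0 < L ∧ τ - 2 + B * L ^ (γ - 1) ∈ Set.Ioc 0 1 := by
  have hlim : Tendsto (fun L : ℝ ↦ B * L ^ (γ - 1)) atTop (𝓝 0) := by
    simpa [neg_sub] using (tendsto_rpow_neg_atTop (sub_pos.2 hγ)).const_mul B
  filter_upwards [eventually_gt_atTop 0, hlim.eventually_le_const (sub_pos.2 hτ.2)]
    with L hL hsmall
  exact ⟨hL, add_pos (sub_pos.2 hτ.1) (mul_pos hB (rpow_pos_of_pos hL _)), by linarith⟩

lemma exp_le_rpow_mul_of_log_pos (hC : 0 ≤ C) (hB : 2 * C ≤ B) (hγ : γ ≤ 1) {y D : ℝ}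
    (hy : 0 < y) (hL : 0 < log y) (hD : D = τ - 2 + B * log y ^ (γ - 1)) (hD₀ : 0 < D)
    (hD₁ : D ≤ 1) :
    exp (C * log y ^ γ) ≤ (y ^ (1 / D)) ^ (2 - τ - C * log (y ^ (1 / D)) ^ (γ - 1)) * y := by
  have hlog : log (y ^ (1 / D)) = log y / D := by rw [log_rpow hy, one_div_mul_eq_div]
  refine (le_log_iff_exp_le (by positivity)).1 ?_
  rw [log_mul (by positivity) hy.ne', log_rpow (by positivity), hlog,
    sub_mul_div_add_eq (B := B) hL hD₀ (by rw [hD]; ring), mul_comm]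
  exact mul_le_mul_of_nonneg_left (le_div_sub_div_rpow hC hB hD₀ hD₁ hγ) (by positivity)

lemma pos_and_le_log_of_rec {M : ℝ}
    (hM : ∀ L ≥ M, 0 < L ∧ τ - 2 + B * L ^ (γ - 1) ∈ Set.Ioc 0 1)
    {y : ℕ → ℝ} (hy₀ : 0 < y 0) (hM₀ : M ≤ log (y 0))
    (hrec : ∀ i, y (i + 1) = y i ^ (1 / (τ - 2 + B * log (y i) ^ (γ - 1)))) :
    ∀ i, 0 < y i ∧ M ≤ log (y i) := by
  intro i
  induction i with
  | zero => exact ⟨hy₀, hM₀⟩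
  | succ i ih =>
    obtain ⟨hy, hML⟩ := ih
    obtain ⟨hL, hD₀, hD₁⟩ := hM _ hML
    rw [hrec i, log_rpow hy, one_div_mul_eq_div]
    exact ⟨rpow_pos_of_pos hy _, hML.trans (le_div_self hL.le hD₀ hD₁)⟩

end

/-- For every `C > 0` and every `B > 2C` there exists `k₀` such that for all
`y 0 = k ≥ k₀` and all `i ≥ 0` the recursively defined sequence
`y (i+1) = y i ^ (1 / (τ - 2 + B * (log (y i)) ^ (γ - 1)))` satisfies
`y (i+1) ^ (2 - τ - C * (log (y (i+1)))^(γ-1)) * y i ≥ exp (C * (log (y i))^γ)`. -/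
theorem stmt1 (τ γ : ℝ) (hτ : 2 < τ ∧ τ < 3) (hγ : 0 < γ ∧ γ < 1)
    (C : ℝ) (hC : 0 < C) (B : ℝ) (hB : 2 * C < B) :
    ∃ k₀ : ℝ, 1 < k₀ ∧ ∀ k : ℝ, k₀ ≤ k →
      ∀ y : ℕ → ℝ, y 0 = k →
        (∀ i : ℕ, y (i + 1) = (y i) ^ (1 / (τ - 2 + B * (Real.log (y i)) ^ (γ - 1)))) →
        ∀ i : ℕ,
          (y (i + 1)) ^ (2 - τ - C * (Real.log (y (i + 1))) ^ (γ - 1)) * y i ≥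
            Real.exp (C * (Real.log (y i)) ^ γ) := by
  obtain ⟨M, hM⟩ := eventually_atTop.1 (eventually_exponent_mem_Ioc hτ hγ.2 (by linarith))
  have hM₀ : 0 < M := (hM M le_rfl).1
  refine ⟨exp M, one_lt_exp_iff.2 hM₀, fun k hk y hy₀ hrec i ↦ ?_⟩
  have hk₀ : 0 < y 0 := hy₀ ▸ (exp_pos M).trans_le hk
  have hMk : M ≤ log (y 0) := (le_log_iff_exp_le hk₀).2 (hy₀ ▸ hk)
  obtain ⟨hy, hML⟩ := pos_and_le_log_of_rec hM hk₀ hMk hrec i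
  obtain ⟨hL, hD₀, hD₁⟩ := hM _ hML
  rw [hrec i]
  exact exp_le_rpow_mul_of_log_pos hC.le hB.le hγ.2.le hy hL rfl hD₀ hD₁
end

section
/- For every C > 0, every B > 2C and every constant c̃ > 0, the sums S(k) := ∑_{i=0}^∞ exp( −c̃ · y_{i+1}^{2−τ−C(log y_{i+1})^{γ−1}} · y_i ) (computed from the recursion started at y₀ = k) are finite for all sufficiently large k, and S(k) → 0 as k → ∞. -/
/-- The recursively defined sequence `y 0 = k`,
`y (i+1) = y i ^ (1 / (τ - 2 + B * (log (y i)) ^ (γ - 1)))`. -/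
noncomputable def ySeq (τ γ B k : ℝ) : ℕ → ℝ
  | 0 => k
  | (i + 1) => (ySeq τ γ B k i) ^ (1 / (τ - 2 + B * (Real.log (ySeq τ γ B k i)) ^ (γ - 1)))

/-!
With `L i = log (y i)` the recursion reads `L (i+1) = L i / (τ - 2 + B * L i ^ (γ - 1))`.
As soon as `B * L ^ (γ - 1) ≤ (3 - τ) / 2` the denominator is at most `(τ - 1) / 2 < 1`, so
`L i ≥ ρ ^ i * log k` with `ρ = 2 / (τ - 1) > 1`. The logarithm of
`y (i+1) ^ (2 - τ - C * L (i+1) ^ (γ - 1)) * y i` equals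
`L (i+1) * (B * L i ^ (γ - 1) - C * L (i+1) ^ (γ - 1)) ≥ (B - C) * L i ^ γ`, which for large `k`
is at least `a + i` with `a = (B - C) * (log k) ^ γ`. Hence the `i`-th summand is at most
`exp (-c̃ * exp a) * exp (-c̃) ^ i`, and summing the geometric series gives both claims.
-/

open Real Filter Topology

theorem summable_and_tendsto_tsum_zero_of_le_geometric {α : Type*} {l : Filter α}
    {f : α → ℕ → ℝ} {g : α → ℝ} {r : ℝ} (hr0 : 0 ≤ r) (hr1 : r < 1) (hf : ∀ k i, 0 ≤ f k i)
    (hfg : ∀ᶠ k in l, ∀ i, f k i ≤ g k * r ^ i) (hg : Tendsto g l (𝓝 0)) :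
    (∀ᶠ k in l, Summable (f k)) ∧ Tendsto (fun k => ∑' i, f k i) l (𝓝 0) := by
  have hgeom : Summable (fun i : ℕ => r ^ i) := summable_geometric_of_lt_one hr0 hr1
  have hsum : ∀ᶠ k in l, Summable (f k) :=
    hfg.mono fun k hk => (hgeom.mul_left (g k)).of_nonneg_of_le (hf k) hk
  refine ⟨hsum, squeeze_zero' (Eventually.of_forall fun k => tsum_nonneg (hf k)) ?_
    (by simpa using hg.mul_const (1 - r)⁻¹)⟩
  filter_upwards [hfg, hsum] with k hk hks
  calc ∑' i, f k i ≤ ∑' i, g k * r ^ i := hks.tsum_le_tsum hk (hgeom.mul_left _)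
    _ = g k * (1 - r)⁻¹ := by rw [tsum_mul_left, tsum_geometric_of_lt_one hr0 hr1]

theorem add_nat_le_mul_rpow_pow {a γ ρ : ℝ} (hρ : 0 < ρ) (ha : 0 ≤ a)
    (h : 1 ≤ a * γ * log ρ) (i : ℕ) : a + i ≤ a * (ρ ^ i) ^ γ := by
  have hexp : (ρ ^ i) ^ γ = exp (i * γ * log ρ) := by
    rw [rpow_def_of_pos (pow_pos hρ i), log_pow]
    ring_nf
  rw [hexp]
  nlinarith [add_one_le_exp (i * γ * log ρ), mul_le_mul_of_nonneg_left h (Nat.cast_nonneg' i)]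

theorem exp_add_nat_le {a : ℝ} (ha : 0 ≤ a) (i : ℕ) : exp a + i ≤ exp (a + i) := by
  rw [exp_add]
  nlinarith [one_le_exp ha, add_one_le_exp (i : ℝ)]

theorem two_div_mul_le_div {τ γ B M L : ℝ} (hτ : 2 < τ) (hB : 0 ≤ B) (hγ : γ ≤ 1)
    (hM : 0 < M) (hBM : B * M ^ (γ - 1) ≤ (3 - τ) / 2) (hML : M ≤ L) :
    2 / (τ - 1) * L ≤ L / (τ - 2 + B * L ^ (γ - 1)) := by
  have hL : 0 < L := hM.trans_le hML
  have hBL : B * L ^ (γ - 1) ≤ (3 - τ) / 2 :=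
    (mul_le_mul_of_nonneg_left (rpow_le_rpow_of_nonpos hM hML (by linarith)) hB).trans hBM
  have hd : 0 < τ - 2 + B * L ^ (γ - 1) := by
    nlinarith [mul_nonneg hB (rpow_nonneg hL.le (γ - 1))]
  calc 2 / (τ - 1) * L = L / ((τ - 1) / 2) := by field_simp
    _ ≤ L / (τ - 2 + B * L ^ (γ - 1)) := div_le_div_of_nonneg_left hL.le hd (by linarith)

theorem sub_mul_rpow_le {τ γ B C L L' : ℝ} (hC : 0 ≤ C) (hCB : C ≤ B) (hγ : γ ≤ 1)
    (hL : 0 < L) (hLL' : L ≤ L') (hstep : L' * (τ - 2 + B * L ^ (γ - 1)) = L) :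
    (B - C) * L ^ γ ≤ L' * (2 - τ - C * L' ^ (γ - 1)) + L := by
  have hpow : L' ^ (γ - 1) ≤ L ^ (γ - 1) := rpow_le_rpow_of_nonpos hL hLL' (by linarith)
  have hLγ : L ^ γ = L * L ^ (γ - 1) := by
    conv_lhs => rw [show γ = 1 + (γ - 1) by ring, rpow_add hL, rpow_one]
  have hnonneg : 0 ≤ (B - C) * L ^ (γ - 1) := mul_nonneg (by linarith) (rpow_nonneg hL.le _)
  calc (B - C) * L ^ γ = L * ((B - C) * L ^ (γ - 1)) := by rw [hLγ]; ring
    _ ≤ L' * ((B - C) * L ^ (γ - 1)) := mul_le_mul_of_nonneg_right hLL' hnonneg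
    _ ≤ L' * (B * L ^ (γ - 1) - C * L' ^ (γ - 1)) := by
        gcongr
        · linarith
        · linarith [mul_le_mul_of_nonneg_left hpow hC]
    _ = L' * (2 - τ - C * L' ^ (γ - 1)) + L := by linear_combination hstep

noncomputable def ySeqTerm (τ γ B C k : ℝ) (i : ℕ) : ℝ :=
  ySeq τ γ B k (i + 1) ^ (2 - τ - C * log (ySeq τ γ B k (i + 1)) ^ (γ - 1)) * ySeq τ γ B k i

section
variable {τ γ B k : ℝ}

theorem ySeq_pos (hk : 0 < k) (i : ℕ) : 0 < ySeq τ γ B k i := by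
  induction i with
  | zero => exact hk
  | succ i ih => exact rpow_pos_of_pos ih _

theorem log_ySeq_succ (hk : 0 < k) (i : ℕ) :
    log (ySeq τ γ B k (i + 1)) =
      log (ySeq τ γ B k i) / (τ - 2 + B * log (ySeq τ γ B k i) ^ (γ - 1)) := by
  rw [ySeq, log_rpow (ySeq_pos hk i), one_div_mul_eq_div]

theorem log_ySeqTerm {C : ℝ} (hk : 0 < k) (i : ℕ) :
    log (ySeqTerm τ γ B C k i) =
      log (ySeq τ γ B k (i + 1)) * (2 - τ - C * log (ySeq τ γ B k (i + 1)) ^ (γ - 1)) +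
        log (ySeq τ γ B k i) := by
  rw [ySeqTerm, log_mul (rpow_pos_of_pos (ySeq_pos hk _) _).ne' (ySeq_pos hk i).ne',
    log_rpow (ySeq_pos hk _), mul_comm]

theorem pow_mul_log_le_log_ySeq (hτ : 2 < τ) (hτ3 : τ < 3) (hB : 0 ≤ B) (hγ : γ ≤ 1)
    (hk : 1 < k) (hBk : B * log k ^ (γ - 1) ≤ (3 - τ) / 2) (i : ℕ) :
    (2 / (τ - 1)) ^ i * log k ≤ log (ySeq τ γ B k i) := by
  have hlogk : 0 < log k := log_pos hk
  have hρ : 1 ≤ 2 / (τ - 1) := by rw [le_div_iff₀ (by linarith)]; linarith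
  induction i with
  | zero => simp [ySeq]
  | succ i ih =>
    have hkL : log k ≤ log (ySeq τ γ B k i) :=
      (le_mul_of_one_le_left hlogk.le (one_le_pow₀ hρ)).trans ih
    rw [log_ySeq_succ (by linarith), pow_succ', mul_assoc]
    exact (mul_le_mul_of_nonneg_left ih (by linarith)).trans
      (two_div_mul_le_div hτ hB hγ hlogk hBk hkL)

theorem exp_add_nat_le_ySeqTerm {C : ℝ} (hτ : 2 < τ) (hτ3 : τ < 3) (hγ0 : 0 ≤ γ) (hγ : γ ≤ 1)
    (hC : 0 ≤ C) (hCB : C ≤ B) (hk : 1 < k) (hBk : B * log k ^ (γ - 1) ≤ (3 - τ) / 2)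
    (ha : 1 ≤ (B - C) * log k ^ γ * γ * log (2 / (τ - 1))) (i : ℕ) :
    exp ((B - C) * log k ^ γ) + i ≤ ySeqTerm τ γ B C k i := by
  have hB : 0 ≤ B := hC.trans hCB
  have hk0 : 0 < k := one_pos.trans hk
  have hlogk : 0 < log k := log_pos hk
  have hρ0 : 0 < 2 / (τ - 1) := div_pos two_pos (by linarith)
  have hρ : 1 ≤ 2 / (τ - 1) := by rw [le_div_iff₀ (by linarith)]; linarith
  set L := log (ySeq τ γ B k i)
  set L' := log (ySeq τ γ B k (i + 1))
  have hkL : (2 / (τ - 1)) ^ i * log k ≤ L := pow_mul_log_le_log_ySeq hτ hτ3 hB hγ hk hBk i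
  have hL : 0 < L := (mul_pos (pow_pos hρ0 i) hlogk).trans_le hkL
  have hkL' : log k ≤ L := (le_mul_of_one_le_left hlogk.le (one_le_pow₀ hρ)).trans hkL
  have hL' : L' = L / (τ - 2 + B * L ^ (γ - 1)) := log_ySeq_succ hk0 i
  have hLL' : L ≤ L' := by
    rw [hL']
    exact (le_mul_of_one_le_left hL.le hρ).trans (two_div_mul_le_div hτ hB hγ hlogk hBk hkL')
  have hstep : L' * (τ - 2 + B * L ^ (γ - 1)) = L := by
    rw [hL']
    exact div_mul_cancel₀ _ (by nlinarith [mul_nonneg hB (rpow_nonneg hL.le (γ - 1))])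
  have ha0 : 0 ≤ (B - C) * log k ^ γ := mul_nonneg (by linarith) (rpow_nonneg hlogk.le _)
  calc exp ((B - C) * log k ^ γ) + i ≤ exp ((B - C) * log k ^ γ + i) := exp_add_nat_le ha0 i
    _ ≤ exp ((B - C) * log k ^ γ * ((2 / (τ - 1)) ^ i) ^ γ) :=
        exp_le_exp.2 (add_nat_le_mul_rpow_pow hρ0 ha0 ha i)
    _ = exp ((B - C) * ((2 / (τ - 1)) ^ i * log k) ^ γ) := by
        rw [mul_rpow (by positivity) hlogk.le, mul_comm (_ ^ γ), mul_assoc]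
    _ ≤ exp ((B - C) * L ^ γ) := by gcongr
    _ ≤ exp (log (ySeqTerm τ γ B C k i)) := by
        rw [exp_le_exp, log_ySeqTerm hk0]
        exact sub_mul_rpow_le hC hCB hγ hL hLL' hstep
    _ = ySeqTerm τ γ B C k i :=
        exp_log (mul_pos (rpow_pos_of_pos (ySeq_pos hk0 _) _) (ySeq_pos hk0 i))

end

/-- For every `C > 0`, every `B > 2C` and every constant `c̃ > 0`, the sums
`S(k) := ∑_{i=0}^∞ exp(-c̃ · y_{i+1}^(2-τ-C(log y_{i+1})^(γ-1)) · y_i)` (computed from the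
recursion started at `y 0 = k`) are finite for all sufficiently large `k`, and `S(k) → 0`
as `k → ∞`. -/
theorem stmt3 (τ γ : ℝ) (hτ : 2 < τ ∧ τ < 3) (hγ : 0 < γ ∧ γ < 1)
    (C B ctilde : ℝ) (hC : 0 < C) (hB : 2 * C < B) (hctilde : 0 < ctilde) :
    (∀ᶠ k : ℝ in Filter.atTop,
      Summable (fun i : ℕ =>
        Real.exp (-(ctilde *
          (ySeq τ γ B k (i + 1)) ^
            (2 - τ - C * (Real.log (ySeq τ γ B k (i + 1))) ^ (γ - 1)) *
          ySeq τ γ B k i)))) ∧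
    Filter.Tendsto (fun k : ℝ => ∑' i : ℕ,
        Real.exp (-(ctilde *
          (ySeq τ γ B k (i + 1)) ^
            (2 - τ - C * (Real.log (ySeq τ γ B k (i + 1))) ^ (γ - 1)) *
          ySeq τ γ B k i)))
      Filter.atTop (nhds 0) := by
  obtain ⟨hτ2, hτ3⟩ := hτ
  obtain ⟨hγ0, hγ1⟩ := hγ
  have hρ : 0 < log (2 / (τ - 1)) := log_pos (by rw [lt_div_iff₀ (by linarith)]; linarith)
  have hlog : Tendsto log atTop atTop := tendsto_log_atTop
  have ha : Tendsto (fun k => (B - C) * log k ^ γ) atTop atTop :=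
    ((tendsto_rpow_atTop hγ0).comp hlog).const_mul_atTop (by linarith)
  have hBlog : Tendsto (fun k => B * log k ^ (γ - 1)) atTop (𝓝 0) := by
    simpa [neg_sub] using
      ((tendsto_rpow_neg_atTop (by linarith : 0 < 1 - γ)).comp hlog).const_mul B
  have hk : ∀ᶠ k in atTop, 1 < k ∧ B * log k ^ (γ - 1) ≤ (3 - τ) / 2 ∧
      1 ≤ (B - C) * log k ^ γ * γ * log (2 / (τ - 1)) :=
    (eventually_gt_atTop 1).and <| (hBlog.eventually (ge_mem_nhds (by linarith))).and <|
      (ha.atTop_mul_const (mul_pos hγ0 hρ)).eventually_ge_atTop 1 |>.mono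
        fun k hk => by simpa only [mul_assoc] using hk
  have key := summable_and_tendsto_tsum_zero_of_le_geometric
    (f := fun k i => exp (-(ctilde * ySeqTerm τ γ B C k i)))
    (g := fun k => exp (-(ctilde * exp ((B - C) * log k ^ γ))))
    (exp_pos _).le (exp_lt_one_iff.2 (neg_lt_zero.2 hctilde)) (fun _ _ => (exp_pos _).le) ?_
    (tendsto_exp_atBot.comp <| tendsto_neg_atTop_atBot.comp <|
      (tendsto_exp_atTop.comp ha).const_mul_atTop hctilde)
  · simpa only [ySeqTerm, mul_assoc] using key
  filter_upwards [hk] with k ⟨hk1, hBk, hak⟩ i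
  rw [← exp_nat_mul, ← exp_add, exp_le_exp]
  nlinarith [exp_add_nat_le_ySeqTerm hτ2 hτ3 hγ0.le hγ1.le hC.le (by linarith) hk1 hBk hak i]
end

section
/- For every δ ∈ (0,1) there exists k₀ such that whenever y₀ = k ≥ k₀, the recursively defined sequence satisfies y_i ≥ (k^{1−δ})^{(τ−2)^{−i}} for all i ≥ 0. -/
/-! Write `a i = log (y i)` and `t = τ - 2`. The recursion reads
`a (i + 1) = a i / (t + B * a i ^ (γ - 1)) ≥ (1 - (B / t) * a i ^ (γ - 1)) * a i / t`.
While `a i ≥ (1 - δ) * a 0 * t⁻¹ ^ i` holds, the relative loss `(B / t) * a i ^ (γ - 1)` is at most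
`c * q ^ i` with `q = t ^ (1 - γ) < 1` and `c = (B / t) * ((1 - δ) * a 0) ^ (γ - 1)`. The losses
add up to at most `c / (1 - q)`, which is below `δ` once `a 0 = log k` is large, so the bound
propagates. -/

open Real Filter Finset

theorem geom_sum_range_le_of_lt_one {q : ℝ} (hq0 : 0 ≤ q) (hq1 : q < 1) (n : ℕ) :
    ∑ j ∈ range n, q ^ j ≤ 1 / (1 - q) := by
  rw [range_eq_Ico]
  simpa using geom_sum_Ico_le_of_lt_one (m := 0) (n := n) hq0 hq1

theorem geometric_lower_bound_of_step {a : ℕ → ℝ} {r c q δ : ℝ} (hr : 0 ≤ r) (hc : 0 ≤ c)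
    (hq0 : 0 ≤ q) (hq1 : q < 1) (hcδ : c / (1 - q) ≤ δ) (hδ : δ ≤ 1) (ha : 0 ≤ a 0)
    (hstep : ∀ i, (1 - δ) * a 0 * r ^ i ≤ a i → (1 - c * q ^ i) * r * a i ≤ a (i + 1))
    (i : ℕ) : (1 - δ) * a 0 * r ^ i ≤ a i := by
  have hsum (n : ℕ) : c * ∑ j ∈ range n, q ^ j ≤ δ := calc
    c * ∑ j ∈ range n, q ^ j ≤ c * (1 / (1 - q)) :=
      mul_le_mul_of_nonneg_left (geom_sum_range_le_of_lt_one hq0 hq1 n) hc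
    _ ≤ δ := by rwa [mul_one_div]
  have hweaken (n : ℕ) (h : (1 - c * ∑ j ∈ range n, q ^ j) * a 0 * r ^ n ≤ a n) :
      (1 - δ) * a 0 * r ^ n ≤ a n :=
    le_trans (by gcongr; linarith [hsum n]) h
  suffices h : ∀ n, (1 - c * ∑ j ∈ range n, q ^ j) * a 0 * r ^ n ≤ a n from hweaken i (h i)
  intro n
  induction n with
  | zero => simp
  | succ n ih =>
    have hS : 0 ≤ c * ∑ j ∈ range n, q ^ j := by positivity
    have hloss : c * q ^ n ≤ 1 := by
      have := hsum (n + 1)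
      rw [sum_range_succ, mul_add] at this
      linarith
    calc (1 - c * ∑ j ∈ range (n + 1), q ^ j) * a 0 * r ^ (n + 1)
        ≤ (1 - c * q ^ n) * r * ((1 - c * ∑ j ∈ range n, q ^ j) * a 0 * r ^ n) := by
          rw [sum_range_succ, pow_succ]
          have : 0 ≤ a 0 * r ^ n * r := by positivity
          nlinarith [mul_nonneg (mul_nonneg (by positivity : 0 ≤ c * q ^ n) hS) this]
      _ ≤ (1 - c * q ^ n) * r * a n := by gcongr
      _ ≤ a (n + 1) := hstep n (hweaken n ih)

theorem one_sub_mul_inv_mul_le_div_add_rpow {t B γ A a : ℝ} (ht : 0 < t) (hB : 0 ≤ B)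
    (hγ : γ ≤ 1) (hA : 0 < A) (hAa : A ≤ a) :
    (1 - B / t * A ^ (γ - 1)) * t⁻¹ * a ≤ a / (t + B * a ^ (γ - 1)) := by
  have ha : 0 < a := hA.trans_le hAa
  set ε := B * a ^ (γ - 1)
  have hε : 0 ≤ ε := by positivity
  have hεA : ε ≤ B * A ^ (γ - 1) :=
    mul_le_mul_of_nonneg_left (rpow_le_rpow_of_nonpos hA hAa (by linarith)) hB
  -- `1 / (t + ε) ≥ (1 - ε / t) / t` since `(t - ε) (t + ε) ≤ t ^ 2`
  have hinv : (1 - ε / t) * t⁻¹ ≤ 1 / (t + ε) := by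
    rw [le_div_iff₀ (by positivity)]
    field_simp
    nlinarith [sq_nonneg ε]
  calc (1 - B / t * A ^ (γ - 1)) * t⁻¹ * a ≤ (1 - ε / t) * t⁻¹ * a := by
        rw [div_mul_eq_mul_div]
        gcongr
    _ ≤ 1 / (t + ε) * a := by gcongr
    _ = a / (t + ε) := one_div_mul_eq_div _ _

theorem exists_forall_ge_mul_rpow_le {γ : ℝ} (hγ : γ < 1) (C : ℝ) {ε : ℝ} (hε : 0 < ε) :
    ∃ L, ∀ x ≥ L, C * x ^ (γ - 1) ≤ ε := by
  have h := (tendsto_rpow_neg_atTop (y := 1 - γ) (by linarith)).const_mul C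
  rw [mul_zero] at h
  obtain ⟨L, hL⟩ := eventually_atTop.mp (h.eventually (ge_mem_nhds hε))
  exact ⟨L, fun x hx => by simpa using hL x hx⟩

theorem rpow_iterate_pos {y : ℕ → ℝ} (e : ℝ → ℝ) (h0 : 0 < y 0)
    (hrec : ∀ i, y (i + 1) = y i ^ e (y i)) (i : ℕ) : 0 < y i := by
  induction i with
  | zero => exact h0
  | succ i ih => rw [hrec]; exact rpow_pos_of_pos ih _

theorem le_of_div_add_rpow_recursion {a : ℕ → ℝ} {t B γ δ : ℝ} (ht : 0 < t) (hB : 0 ≤ B)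
    (hγ : γ < 1) (hδ : δ ≤ 1) (hA : 0 < (1 - δ) * a 0) (hq : t⁻¹ ^ (γ - 1) < 1)
    (hc : B / t * ((1 - δ) * a 0) ^ (γ - 1) ≤ δ * (1 - t⁻¹ ^ (γ - 1)))
    (hrec : ∀ i, a (i + 1) = a i / (t + B * a i ^ (γ - 1))) (i : ℕ) :
    (1 - δ) * a 0 * t⁻¹ ^ i ≤ a i := by
  refine geometric_lower_bound_of_step (by positivity) (by positivity) (by positivity) hq
    ((div_le_iff₀ (sub_pos.2 hq)).2 hc) hδ (pos_of_mul_pos_right hA (by linarith)).le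
    (fun i hi => ?_) i
  calc (1 - B / t * ((1 - δ) * a 0) ^ (γ - 1) * (t⁻¹ ^ (γ - 1)) ^ i) * t⁻¹ * a i
      = (1 - B / t * ((1 - δ) * a 0 * t⁻¹ ^ i) ^ (γ - 1)) * t⁻¹ * a i := by
        rw [mul_rpow hA.le (by positivity), ← rpow_pow_comm (by positivity)]
        ring
    _ ≤ a (i + 1) := by
        rw [hrec]
        exact one_sub_mul_inv_mul_le_div_add_rpow ht hB hγ.le (mul_pos hA (by positivity)) hi

/-- For every `δ ∈ (0,1)` there exists `k₀` such that whenever `y 0 = k ≥ k₀`,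
the recursively defined sequence `y (i+1) = y i ^ (1 / (τ - 2 + B * (log (y i)) ^ (γ - 1)))`
satisfies `y i ≥ (k^(1-δ))^((τ-2)^(-i))` for all `i ≥ 0`. -/
theorem stmt5 (τ γ B : ℝ) (hτ : 2 < τ ∧ τ < 3) (hγ : 0 < γ ∧ γ < 1) (hB : 0 < B)
    (δ : ℝ) (hδ : 0 < δ ∧ δ < 1) :
    ∃ k₀ : ℝ, 1 < k₀ ∧ ∀ k : ℝ, k₀ ≤ k →
      ∀ y : ℕ → ℝ, y 0 = k →
        (∀ i : ℕ, y (i + 1) = (y i) ^ (1 / (τ - 2 + B * (Real.log (y i)) ^ (γ - 1)))) →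
        ∀ i : ℕ, (k ^ (1 - δ)) ^ ((τ - 2)⁻¹ ^ i) ≤ y i := by
  obtain ⟨hτ2, hτ3⟩ := hτ
  obtain ⟨hδ0, hδ1⟩ := hδ
  set t := τ - 2
  have ht : 0 < t := by linarith
  have hq : t⁻¹ ^ (γ - 1) < 1 :=
    rpow_lt_one_of_one_lt_of_neg ((one_lt_inv₀ ht).mpr (by linarith)) (by linarith [hγ.2])
  obtain ⟨L, hL⟩ := exists_forall_ge_mul_rpow_le hγ.2 (B / t) (mul_pos hδ0 (sub_pos.2 hq))
  refine ⟨exp (max L 1 / (1 - δ)), one_lt_exp_iff.2 (by positivity), ?_⟩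
  rintro k hk y rfl hrec i
  have hk0 : 0 < y 0 := (exp_pos _).trans_le hk
  have hlogk : max L 1 ≤ (1 - δ) * log (y 0) := by
    rw [← div_le_iff₀' (by linarith), ← log_exp (max L 1 / (1 - δ))]
    exact log_le_log (exp_pos _) hk
  have hy := rpow_iterate_pos (fun x => 1 / (t + B * log x ^ (γ - 1))) hk0 hrec
  have hbound := le_of_div_add_rpow_recursion (a := fun i => log (y i)) ht hB.le hγ.2 hδ1.le
    (by linarith [le_max_right L 1]) hq (hL _ ((le_max_left _ _).trans hlogk))
    (fun i => by rw [hrec, log_rpow (hy i), one_div_mul_eq_div]) i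
  rw [← rpow_mul hk0.le, rpow_def_of_pos hk0, ← exp_log (hy i)]
  exact exp_le_exp.2 (le_of_eq_of_le (by ring) hbound)
end

section
/- Let τ ∈ (2,3), α ∈ (τ−2, 1), γ := log α / log(τ−2) ∈ (0,1), and let f : (0,1) → [0,∞) be nondecreasing. Let C > 0, let k, δ be reals with k^{1−δ} > e, and set C′ := C·(log(k^{1−δ}))^{−γ}. Assume the explosiveness criterion ∫_0^ε f(e^{−C/y}) (1/y) dy < ∞ holds for some ε > 0. Then for every sequence (y_i)_{i≥0} of reals with y_i ≥ (k^{1−δ})^{(τ−2)^{−i}} for all i, the series ∑_{i=0}^∞ f( exp(−C′ (log y_i)^γ) ) converges. -/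
/-!
Write `β = τ - 2`, `K = k ^ (1 - δ)` and `γ = log_β α`, so that `β ^ γ = α`. From
`log yᵢ ≥ β⁻ⁱ log K` one gets `C' (log yᵢ) ^ γ ≥ C / αⁱ`, hence by monotonicity the `i`-th term
is at most `φ (αⁱ)` with `φ y = f (exp (-C / y))`. On `(αⁱ⁺¹, αⁱ)` the integrand `φ y / y` is at
least `φ (αⁱ⁺¹) / αⁱ`, so `(1 - α) φ (αⁱ⁺¹)` is bounded by the integral over that interval, and
these disjoint intervals eventually lie in `(0, ε)`.
-/

open MeasureTheory Set Real
open scoped ENNReal Function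

lemma exp_neg_mem_Ioo {x : ℝ} (hx : 0 < x) : exp (-x) ∈ Ioo 0 1 :=
  ⟨exp_pos _, exp_lt_one_iff.2 (neg_lt_zero.2 hx)⟩

lemma MonotoneOn.comp_exp_neg_div {f : ℝ → ℝ} (hf : MonotoneOn f (Ioo 0 1)) {C : ℝ}
    (hC : 0 < C) : MonotoneOn (fun y => f (exp (-C / y))) (Ioi 0) := by
  intro a ha b hb hab
  simp only [neg_div]
  refine hf (exp_neg_mem_Ioo (div_pos hC ha)) (exp_neg_mem_Ioo (div_pos hC hb)) ?_
  exact exp_le_exp.2 (neg_le_neg (div_le_div_of_nonneg_left hC.le ha hab))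

lemma ofReal_le_setLIntegral_Ioo_mul_one_div {φ : ℝ → ℝ} (hφ : MonotoneOn φ (Ioi 0))
    {a b : ℝ} (ha : 0 < a) (hab : a ≤ b) (hφa : 0 ≤ φ a) :
    ENNReal.ofReal (φ a * (1 - a / b)) ≤ ∫⁻ y in Ioo a b, ENNReal.ofReal (φ y * (1 / y)) := by
  have hb : 0 < b := ha.trans_le hab
  calc ENNReal.ofReal (φ a * (1 - a / b))
      = ∫⁻ _ in Ioo a b, ENNReal.ofReal (φ a * (1 / b)) := by
        rw [setLIntegral_const, Real.volume_Ioo, ← ENNReal.ofReal_mul (by positivity)]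
        congr 1
        field_simp
    _ ≤ ∫⁻ y in Ioo a b, ENNReal.ofReal (φ y * (1 / y)) := by
        refine setLIntegral_mono' measurableSet_Ioo fun y hy => ENNReal.ofReal_le_ofReal ?_
        have hy0 : 0 < y := ha.trans hy.1
        have hφy : φ a ≤ φ y := hφ ha hy0 hy.1.le
        exact mul_le_mul hφy (one_div_le_one_div_of_le hy0 hy.2.le) (by positivity)
          (hφa.trans hφy)

theorem summable_comp_pow_of_setLIntegral_lt_top {φ : ℝ → ℝ} (hφ : MonotoneOn φ (Ioi 0))
    (hφ0 : ∀ x ∈ Ioi (0 : ℝ), 0 ≤ φ x) {ε : ℝ} (hε : 0 < ε)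
    (hint : ∫⁻ y in Ioo 0 ε, ENNReal.ofReal (φ y * (1 / y)) < ⊤) {α : ℝ} (hα0 : 0 < α)
    (hα1 : α < 1) : Summable fun i : ℕ => φ (α ^ i) := by
  obtain ⟨N, hN⟩ := exists_pow_lt_of_lt_one hε hα1
  set I : ℕ → Set ℝ := fun i => Ioo (α ^ (i + 1 + N)) (α ^ (i + N))
  have hanti : Antitone fun i : ℕ => α ^ (i + N) :=
    (pow_right_anti₀ hα0.le hα1.le).comp_monotone fun _ _ h => Nat.add_le_add_right h N
  have hdisj : Pairwise (Disjoint on I) := by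
    simpa only [Order.succ_eq_add_one] using hanti.pairwise_disjoint_on_Ioo_succ
  have hsub : ⋃ i, I i ⊆ Ioo 0 ε := iUnion_subset fun i x hx =>
    ⟨(pow_pos hα0 _).trans hx.1,
      hx.2.trans_le ((pow_le_pow_of_le_one hα0.le hα1.le (Nat.le_add_left N i)).trans hN.le)⟩
  have hterm : ∀ i, ENNReal.ofReal (φ (α ^ (i + 1 + N)) * (1 - α)) ≤
      ∫⁻ y in I i, ENNReal.ofReal (φ y * (1 / y)) := fun i => by
    have hpow : α ^ (i + 1 + N) = α * α ^ (i + N) := by ring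
    have h := ofReal_le_setLIntegral_Ioo_mul_one_div hφ (pow_pos hα0 (i + 1 + N))
      (hanti (Nat.le_succ i)) (hφ0 _ (pow_pos hα0 _))
    rwa [hpow, mul_div_cancel_right₀ _ (pow_pos hα0 _).ne', ← hpow] at h
  have htsum : ∑' i, ENNReal.ofReal (φ (α ^ (i + 1 + N)) * (1 - α)) ≠ ⊤ := by
    refine (lt_of_le_of_lt ?_ hint).ne
    calc ∑' i, ENNReal.ofReal (φ (α ^ (i + 1 + N)) * (1 - α))
        ≤ ∑' i, ∫⁻ y in I i, ENNReal.ofReal (φ y * (1 / y)) := ENNReal.tsum_le_tsum hterm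
      _ = ∫⁻ y in ⋃ i, I i, ENNReal.ofReal (φ y * (1 / y)) :=
        (lintegral_iUnion (fun _ => measurableSet_Ioo) hdisj _).symm
      _ ≤ ∫⁻ y in Ioo 0 ε, ENNReal.ofReal (φ y * (1 / y)) := lintegral_mono_set hsub
  have hshift : Summable fun i => φ (α ^ (i + 1 + N)) * (1 - α) := by
    refine (ENNReal.summable_toReal htsum).congr fun i => ENNReal.toReal_ofReal ?_
    exact mul_nonneg (hφ0 _ (pow_pos hα0 _)) (sub_nonneg.2 hα1.le)
  rw [summable_mul_right_iff (sub_ne_zero.2 hα1.ne')] at hshift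
  exact (summable_nat_add_iff (N + 1)).1 (by simpa only [add_right_comm, add_assoc] using hshift)

lemma div_pow_le_mul_log_rpow_logb {α β C K Y : ℝ} (hα0 : 0 < α) (hα1 : α < 1) (hβ0 : 0 < β)
    (hβ1 : β < 1) (hC : 0 ≤ C) (hK : 1 < K) (i : ℕ) (hY : K ^ (β⁻¹ ^ i) ≤ Y) :
    C / α ^ i ≤ C * log K ^ (-logb β α) * log Y ^ logb β α := by
  set γ := logb β α
  have hγ : 0 ≤ γ := (logb_pos_of_base_lt_one hβ0 hβ1 hα0 hα1).le
  have hK0 : 0 < K := one_pos.trans hK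
  have hlogK : 0 < log K := log_pos hK
  have hpow : (β⁻¹ ^ i) ^ γ = (α ^ i)⁻¹ := by
    rw [inv_pow, inv_rpow (by positivity), ← rpow_natCast, ← rpow_mul hβ0.le, mul_comm,
      rpow_mul hβ0.le, rpow_logb hβ0 hβ1.ne hα0, rpow_natCast]
  have hlogY : β⁻¹ ^ i * log K ≤ log Y := by
    rw [← log_rpow hK0]
    exact log_le_log (by positivity) hY
  calc C / α ^ i = C * log K ^ (-γ) * ((β⁻¹ ^ i) ^ γ * log K ^ γ) := by
        rw [hpow, rpow_neg hlogK.le]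
        field_simp
    _ = C * log K ^ (-γ) * (β⁻¹ ^ i * log K) ^ γ := by
        rw [mul_rpow (by positivity) hlogK.le]
    _ ≤ C * log K ^ (-γ) * log Y ^ γ := by gcongr

/-- Let `τ ∈ (2,3)`, `α ∈ (τ-2, 1)`, `γ := log α / log(τ-2) ∈ (0,1)`, and let
`f : (0,1) → [0,∞)` be nondecreasing. Let `C > 0`, let `k, δ` be reals with `k^(1-δ) > e`,
and set `C' := C·(log(k^(1-δ)))^(-γ)`. Assume `∫_0^ε f(e^(-C/y)) (1/y) dy < ∞` for some
`ε > 0`. Then for every sequence `(y i)` of reals with `y i ≥ (k^(1-δ))^((τ-2)^(-i))` for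
all `i`, the series `∑_{i=0}^∞ f(exp(-C'·(log (y i))^γ))` converges. -/
theorem stmt14 (τ α : ℝ) (hτ : 2 < τ ∧ τ < 3) (hα : τ - 2 < α ∧ α < 1)
    (f : ℝ → ℝ) (hmono : MonotoneOn f (Set.Ioo 0 1))
    (hf0 : ∀ x ∈ Set.Ioo (0 : ℝ) 1, 0 ≤ f x)
    (C k δ : ℝ) (hC : 0 < C) (hk : Real.exp 1 < k ^ (1 - δ))
    (hint : ∃ ε : ℝ, 0 < ε ∧
      ∫⁻ y in Set.Ioo 0 ε, ENNReal.ofReal (f (Real.exp (-C / y)) * (1 / y)) < ⊤)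
    (y : ℕ → ℝ) (hy : ∀ i : ℕ, (k ^ (1 - δ)) ^ ((τ - 2)⁻¹ ^ i) ≤ y i) :
    Summable (fun i : ℕ =>
      f (Real.exp (-((C * (Real.log (k ^ (1 - δ))) ^ (-(Real.log α / Real.log (τ - 2)))) *
        (Real.log (y i)) ^ (Real.log α / Real.log (τ - 2)))))) := by
  have hβ0 : 0 < τ - 2 := by linarith
  have hα0 : 0 < α := hβ0.trans hα.1
  have hK : 1 < k ^ (1 - δ) := (one_lt_exp_iff.2 one_pos).trans hk
  obtain ⟨ε, hε, hI⟩ := hint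
  have hφ0 : ∀ x ∈ Ioi (0 : ℝ), 0 ≤ f (exp (-C / x)) := fun x hx =>
    hf0 _ (by rw [neg_div]; exact exp_neg_mem_Ioo (div_pos hC hx))
  have hsum := summable_comp_pow_of_setLIntegral_lt_top (hmono.comp_exp_neg_div hC) hφ0 hε hI
    hα0 hα.2
  simp only [log_div_log]
  have hpos : ∀ i : ℕ, 0 < C / α ^ i := fun i => div_pos hC (pow_pos hα0 i)
  have hle := fun i =>
    div_pow_le_mul_log_rpow_logb hα0 hα.2 hβ0 (by linarith) hC.le hK i (hy i)
  have hmem := fun i => exp_neg_mem_Ioo ((hpos i).trans_le (hle i))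
  refine hsum.of_nonneg_of_le (fun i => hf0 _ (hmem i)) fun i => ?_
  rw [neg_div]
  exact hmono (hmem i) (exp_neg_mem_Ioo (hpos i)) (exp_le_exp.2 (neg_le_neg (hle i)))
end

section
/- Let b, c > 0 and γ ∈ (0,1), and define y(x) := (2x/b)·exp( 2c (log(2x/b))^γ ) for x > 0. Then for all sufficiently large x, y(x) · b·exp( −c (log y(x))^γ ) ≥ 2x. -/
/-!
Put `L = log (2x/b)`, so that `log y = L + 2c L^γ` and the claim reduces to
`c (log y)^γ ≤ 2c L^γ`. Since `γ < 1`, eventually `2c L^γ ≤ L`, hence `log y ≤ 2L` and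
`(log y)^γ ≤ 2^γ L^γ ≤ 2 L^γ`.
-/

open Real Filter

lemma eventually_mul_rpow_le_self {γ : ℝ} (hγ : γ < 1) (k : ℝ) :
    ∀ᶠ L : ℝ in atTop, k * L ^ γ ≤ L := by
  have hdecay : Tendsto (fun L : ℝ => k * L ^ (γ - 1)) atTop (nhds 0) := by
    simpa [neg_sub] using (tendsto_rpow_neg_atTop (sub_pos.2 hγ)).const_mul k
  filter_upwards [hdecay.eventually_lt_const one_pos, eventually_gt_atTop 0] with L hsmall hL
  calc k * L ^ γ = k * L ^ (γ - 1) * L := by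
        rw [rpow_sub_one hL.ne']; field_simp
    _ ≤ 1 * L := by gcongr
    _ = L := one_mul L

lemma rpow_add_le_two_mul_rpow {L a γ : ℝ} (ha : 0 ≤ a) (haL : a ≤ L) (hγ0 : 0 ≤ γ)
    (hγ1 : γ ≤ 1) : (L + a) ^ γ ≤ 2 * L ^ γ := by
  have hL : 0 ≤ L := ha.trans haL
  calc (L + a) ^ γ ≤ (2 * L) ^ γ := by gcongr; linarith
    _ = 2 ^ γ * L ^ γ := mul_rpow zero_le_two hL
    _ ≤ 2 * L ^ γ := by
        gcongr
        simpa using rpow_le_rpow_of_exponent_le one_le_two hγ1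

lemma tendsto_log_two_mul_div_atTop {b : ℝ} (hb : 0 < b) :
    Tendsto (fun x : ℝ => log (2 * x / b)) atTop atTop :=
  tendsto_log_atTop.comp
    ((tendsto_id.const_mul_atTop two_pos).atTop_div_const hb)

/-- Let `b, c > 0` and `γ ∈ (0,1)`, and define
`y(x) := (2x/b)·exp(2c (log(2x/b))^γ)` for `x > 0`. Then for all sufficiently large `x`,
`y(x) · b·exp(-c (log y(x))^γ) ≥ 2x`. -/
theorem stmt15 (b c γ : ℝ) (hb : 0 < b) (hc : 0 < c) (hγ : 0 < γ ∧ γ < 1) :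
    ∀ᶠ x : ℝ in Filter.atTop, ∀ y : ℝ,
      y = (2 * x / b) * Real.exp (2 * c * (Real.log (2 * x / b)) ^ γ) →
      2 * x ≤ y * (b * Real.exp (-c * (Real.log y) ^ γ)) := by
  have hlog := tendsto_log_two_mul_div_atTop hb
  filter_upwards [hlog.eventually (eventually_mul_rpow_le_self hγ.2 (2 * c)),
    hlog.eventually_ge_atTop 0, eventually_gt_atTop 0] with x hsmall hL hx y hy
  set L := log (2 * x / b)
  have ht : 0 < 2 * x / b := by positivity
  have hlogy : log y = L + 2 * c * L ^ γ := by
    rw [hy, log_mul ht.ne' (exp_ne_zero _), log_exp]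
  have hpow : (log y) ^ γ ≤ 2 * L ^ γ := by
    rw [hlogy]
    exact rpow_add_le_two_mul_rpow (mul_nonneg (by positivity) (rpow_nonneg hL γ)) hsmall
      hγ.1.le hγ.2.le
  have hexponent : 0 ≤ 2 * c * L ^ γ - c * (log y) ^ γ := by nlinarith
  calc 2 * x ≤ 2 * x * exp (2 * c * L ^ γ - c * (log y) ^ γ) :=
        le_mul_of_one_le_right (by positivity) (one_le_exp hexponent)
    _ = y * (b * exp (-c * (log y) ^ γ)) := by
        rw [hy, sub_eq_add_neg, exp_add, neg_mul]; field_simp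
end

section
/- Let τ ∈ (2,3), γ ∈ (0,1), C > 0, b, c > 0 and x₀ ≥ 2. Let μ be a probability mass function on ℕ such that μ({ y ∈ ℕ : y > x }) ≥ x^{ −(τ−1) − C(log x)^{γ−1} } for all real x ≥ x₀. Let p : ℕ → [0,1] be nonincreasing with p(d) ≥ b·exp( −c (log d)^γ ) for all d ≥ 2. Let ν be the probability mass function on ℕ obtained as the mixture ν := μ.bind( d ↦ Binomial(d, p(d)) ), i.e. ν(m) = ∑_d μ(d)·P(Bin(d, p(d)) = m). Then there exist C′ > 0 and x₁ such that for all real x ≥ x₁: ν({ y ∈ ℕ : y > x }) ≥ x^{−(τ−1)} · exp( −C′ (log x)^γ ). -/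
open Real Filter Asymptotics
open scoped ENNReal NNReal

/-!
For large `x` put `D = x · exp ((2c + 1) (log x)^γ)`. Every `d > D` satisfies
`4 x log d ≤ p(d) d`, and a union bound over the outcomes `k ≤ ⌊x⌋` then shows that
`Bin(d, p(d))` exceeds `x` with probability at least `1/2`. Hence `ν(> x) ≥ μ(> D) / 2`, and
since `log D = log x + O((log x)^γ)`, the assumed tail bound for `μ` at `D` only costs a factor
`exp (-O((log x)^γ))`.
-/

set_option linter.deprecated false

theorem PMF.mul_toMeasure_le_toMeasure_bind {α β : Type*} [MeasurableSpace α] [MeasurableSpace β]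
    (μ : PMF α) (κ : α → PMF β) {s : Set β} {A : Set α} (hs : MeasurableSet s)
    (hA : MeasurableSet A) {r : ℝ≥0∞} (hr : ∀ a ∈ A, r ≤ (κ a).toMeasure s) :
    r * μ.toMeasure A ≤ (μ.bind κ).toMeasure s := by
  rw [μ.toMeasure_bind_apply κ s hs, μ.toMeasure_apply hA, ← ENNReal.tsum_mul_left]
  refine ENNReal.tsum_le_tsum fun a => ?_
  by_cases ha : a ∈ A
  · rw [Set.indicator_of_mem ha, mul_comm]
    exact mul_le_mul_right (hr a ha) _
  · simp [Set.indicator_of_notMem ha]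

theorem PMF.binomial_le_of_val_le (q : ℝ≥0) (hq : q ≤ 1) {d N : ℕ} (hd : 0 < d)
    {k : Fin (d + 1)} (hk : (k : ℕ) ≤ N) :
    PMF.binomial q hq d k ≤ ((d : ℝ≥0) ^ N * (1 - q) ^ (d - N) : ℝ≥0) := by
  rw [PMF.binomial_apply, Fin.val_last, mul_comm]
  norm_cast
  have hchoose : (d.choose k : ℝ≥0) ≤ (d : ℝ≥0) ^ N := by
    exact_mod_cast (Nat.choose_le_pow d k).trans (Nat.pow_le_pow_right hd hk)
  calc (d.choose k : ℝ≥0) * (q ^ (k : ℕ) * (1 - q) ^ (d - k))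
      ≤ (d : ℝ≥0) ^ N * (1 * (1 - q) ^ (d - N)) :=
        mul_le_mul' hchoose <| mul_le_mul' (pow_le_one₀ zero_le hq)
          (pow_le_pow_of_le_one zero_le tsub_le_self (Nat.sub_le_sub_left hk d))
    _ = _ := by push_cast; ring

theorem PMF.binomial_map_val_toMeasure_Iic_le (q : ℝ≥0) (hq : q ≤ 1) {d : ℕ} (hd : 0 < d)
    (N : ℕ) : ((PMF.binomial q hq d).map Fin.val).toMeasure (Set.Iic N) ≤
      (((N + 1) * (d : ℝ≥0) ^ N * (1 - q) ^ (d - N) : ℝ≥0) : ℝ≥0∞) := by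
  classical
  rw [PMF.toMeasure_map_apply _ _ _ (measurable_of_countable _) (.of_discrete),
    PMF.toMeasure_apply_fintype, Finset.sum_indicator_eq_sum_filter]
  set S := Finset.univ.filter fun k : Fin (d + 1) => k ∈ Fin.val ⁻¹' Set.Iic N
  have hcard : S.card ≤ N + 1 := by
    simpa using Finset.card_le_card_of_injOn (t := Finset.range (N + 1)) Fin.val
      (fun k hk => by simpa [S, Nat.lt_succ_iff] using hk) Fin.val_injective.injOn
  calc ∑ k ∈ S, PMF.binomial q hq d k
      ≤ ∑ _k ∈ S, (((d : ℝ≥0) ^ N * (1 - q) ^ (d - N) : ℝ≥0) : ℝ≥0∞) :=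
        Finset.sum_le_sum fun k hk => binomial_le_of_val_le q hq hd (by simpa [S] using hk)
    _ ≤ _ := by
        rw [Finset.sum_const, nsmul_eq_mul, mul_assoc]
        push_cast
        gcongr
        exact_mod_cast hcard

theorem floor_add_one_mul_pow_mul_one_sub_pow_le_half {x q : ℝ} {d : ℕ} (hx : exp 1 ≤ x)
    (hxd : x ≤ d) (hq : q ≤ 1) (h : 4 * x * log d ≤ q * d) :
    (⌊x⌋₊ + 1 : ℝ) * (d : ℝ) ^ ⌊x⌋₊ * (1 - q) ^ (d - ⌊x⌋₊) ≤ 1 / 2 := by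
  set N := ⌊x⌋₊
  have hx0 : 0 < x := (exp_pos 1).trans_le hx
  have hlogx : 1 ≤ log x := (le_log_iff_exp_le hx0).2 hx
  have hx1 : 1 ≤ x := by linarith [add_one_le_exp 1]
  have hlogd : 1 ≤ log d := hlogx.trans (log_le_log hx0 hxd)
  have hd0 : (0 : ℝ) < d := hx0.trans_le hxd
  have hq0 : 0 ≤ q := by nlinarith
  have hd4 : 4 * x ≤ d := by nlinarith
  have hNx : (N : ℝ) ≤ x := Nat.floor_le hx0.le
  have hNd : N ≤ d := by exact_mod_cast hNx.trans hxd
  have hexponent : N * log d + log (2 * (N + 1)) ≤ q * ↑(d - N) := by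
    have hlog : log (2 * (N + 1)) ≤ x * log d :=
      calc log (2 * (N + 1)) ≤ log d := log_le_log (by positivity) (by linarith)
        _ ≤ x * log d := le_mul_of_one_le_left (by linarith) hx1
    rw [Nat.cast_sub hNd]
    nlinarith [mul_le_mul_of_nonneg_right hNx (by linarith : (0 : ℝ) ≤ log d)]
  have hpow : (1 - q) ^ (d - N) ≤ exp (-(q * ↑(d - N))) := by
    rw [show -(q * ↑(d - N)) = ↑(d - N) * -q by ring, exp_nat_mul]
    exact pow_le_pow_left₀ (by linarith) (by linarith [add_one_le_exp (-q)]) _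
  calc (N + 1 : ℝ) * (d : ℝ) ^ N * (1 - q) ^ (d - N)
      ≤ (N + 1) * d ^ N * exp (-(N * log d + log (2 * (N + 1)))) := by
        gcongr
        exact hpow.trans (exp_le_exp.2 (neg_le_neg hexponent))
    _ = 1 / 2 := by
        rw [← log_pow, ← log_mul (by positivity) (by positivity), exp_neg, exp_log (by positivity)]
        field_simp

theorem PMF.half_le_binomial_map_val_toMeasure_setOf_lt {x q : ℝ} (hq : q ≤ 1) {d : ℕ}
    (hx : exp 1 ≤ x) (hxd : x ≤ d) (h : 4 * x * log d ≤ q * d) :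
    2⁻¹ ≤ ((PMF.binomial (Real.toNNReal q) (Real.toNNReal_le_one.mpr hq) d).map
      Fin.val).toMeasure {y : ℕ | x < y} := by
  have hx0 : 0 < x := (exp_pos 1).trans_le hx
  have hd : 0 < d := by exact_mod_cast hx0.trans_le hxd
  have hq0 : 0 ≤ q := by
    have : 0 < log (d : ℝ) := log_pos (by linarith [add_one_le_exp 1] : (1 : ℝ) < d)
    nlinarith
  have hset : {y : ℕ | x < y} = (Set.Iic ⌊x⌋₊)ᶜ := by
    ext y
    simp [Nat.floor_lt hx0.le]
  have hsmall : ((PMF.binomial (Real.toNNReal q) (Real.toNNReal_le_one.mpr hq) d).map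
      Fin.val).toMeasure (Set.Iic ⌊x⌋₊) ≤ 2⁻¹ := by
    refine (binomial_map_val_toMeasure_Iic_le _ _ hd _).trans ?_
    have hreal := floor_add_one_mul_pow_mul_one_sub_pow_le_half hx hxd hq h
    rw [← ENNReal.ofReal_coe_nnreal, ← one_div, ← ENNReal.ofReal_one, ← ENNReal.ofReal_ofNat,
      ← ENNReal.ofReal_div_of_pos two_pos]
    refine ENNReal.ofReal_le_ofReal ?_
    push_cast [NNReal.coe_sub (Real.toNNReal_le_one.mpr hq), Real.coe_toNNReal _ hq0]
    exact hreal
  rw [hset, MeasureTheory.prob_compl_eq_one_sub .of_discrete, ← ENNReal.one_sub_inv_two]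
  exact tsub_le_tsub_left hsmall 1

theorem eventually_add_mul_le_of_isLittleO {α : Type*} {l : Filter α} {f g : α → ℝ}
    (hfg : f =o[l] g) (hg : Tendsto g l atTop) (a k : ℝ) :
    ∀ᶠ y in l, a + k * f y ≤ g y := by
  have hε : 0 < 1 / (2 * (|k| + 1)) := by positivity
  filter_upwards [hfg.def hε, hg.eventually_ge_atTop (2 * a), hg.eventually_ge_atTop 0]
    with y hfy hga hg0
  rw [norm_eq_abs, norm_eq_abs, abs_of_nonneg hg0] at hfy
  have hkε : |k| * (1 / (2 * (|k| + 1))) ≤ 1 / 2 := by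
    rw [mul_one_div, div_le_div_iff₀ (by positivity) two_pos]
    linarith
  have hkf : k * f y ≤ g y / 2 :=
    calc k * f y ≤ |k| * |f y| := (le_abs_self _).trans (abs_mul k (f y)).le
      _ ≤ |k| * (1 / (2 * (|k| + 1))) * g y := by rw [mul_assoc]; gcongr
      _ ≤ 1 / 2 * g y := by gcongr
      _ = g y / 2 := by ring
  linarith

theorem isLittleO_rpow_id_atTop {γ : ℝ} (hγ : γ < 1) : (fun y : ℝ => y ^ γ) =o[atTop] id := by
  refine (isLittleO_iff_tendsto' ((eventually_gt_atTop 0).mono fun y hy h => ?_)).2 ?_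
  · exact absurd h hy.ne'
  · refine (tendsto_rpow_neg_atTop (by linarith : 0 < 1 - γ)).congr' ?_
    filter_upwards [eventually_gt_atTop 0] with y hy
    rw [neg_sub, rpow_sub_one hy.ne', id]

theorem rpow_le_two_mul_rpow {u L γ : ℝ} (hu : 0 ≤ u) (huL : u ≤ 2 * L) (hγ0 : 0 ≤ γ)
    (hγ1 : γ ≤ 1) : u ^ γ ≤ 2 * L ^ γ := by
  have hL : 0 ≤ L := by linarith
  calc u ^ γ ≤ (L + L) ^ γ := rpow_le_rpow hu (by linarith) hγ0
    _ ≤ L ^ γ + L ^ γ := rpow_add_le_add_rpow hL hL hγ0 hγ1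
    _ = 2 * L ^ γ := by ring

theorem eventually_add_add_log_add_mul_rpow_le (a : ℝ) {γ c : ℝ} (hγ0 : 0 < γ) (hγ1 : γ < 1)
    (hc : 0 ≤ c) :
    ∀ᶠ L in atTop, ∀ u, L + (2 * c + 1) * L ^ γ ≤ u → a + L + log u + c * u ^ γ ≤ u := by
  have hlog := isLittleO_log_rpow_atTop hγ0
  have hrpow := isLittleO_rpow_id_atTop hγ1
  have hlarge : ∀ᶠ u in atTop, a + log u + c * u ^ γ ≤ u / 2 := by
    filter_upwards [eventually_add_mul_le_of_isLittleO hlog (tendsto_rpow_atTop hγ0) 0 1,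
      eventually_add_mul_le_of_isLittleO hrpow tendsto_id (2 * a) (2 * (c + 1))] with u h1 h2
    simp only [id] at h2
    linarith
  filter_upwards [eventually_forall_ge_atTop.2 hlarge,
    eventually_add_mul_le_of_isLittleO hlog (tendsto_rpow_atTop hγ0) (a + log 2) 1,
    eventually_gt_atTop 0] with L hlarge hsmall hL0
  intro u hu
  have hLγ : 0 ≤ L ^ γ := rpow_nonneg hL0.le γ
  have hLu : L ≤ u := by nlinarith
  rcases le_or_gt (2 * L) u with h2L | h2L
  · linarith [hlarge u hLu]
  · have hlogu : log u ≤ log 2 + log L := by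
      rw [← log_mul two_ne_zero hL0.ne']
      exact log_le_log (by linarith) h2L.le
    have hrpowu := rpow_le_two_mul_rpow (by linarith) h2L.le hγ0.le hγ1.le
    nlinarith [mul_le_mul_of_nonneg_left hrpowu hc]

theorem le_mul_exp_mul_log_rpow {x K : ℝ} (γ : ℝ) (hx : 1 ≤ x) (hK : 0 ≤ K) :
    x ≤ x * exp (K * log x ^ γ) :=
  le_mul_of_one_le_right (by linarith)
    (one_le_exp (mul_nonneg hK (rpow_nonneg (log_nonneg hx) γ)))

theorem eventually_four_mul_mul_log_le {γ b c : ℝ} (hγ0 : 0 < γ) (hγ1 : γ < 1) (hb : 0 < b)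
    (hc : 0 ≤ c) {p : ℕ → ℝ} (hp : ∀ d : ℕ, 2 ≤ d → b * exp (-c * log d ^ γ) ≤ p d) :
    ∀ᶠ x in atTop, ∀ d : ℕ, x * exp ((2 * c + 1) * log x ^ γ) < d →
      4 * x * log d ≤ p d * d := by
  filter_upwards [tendsto_log_atTop.eventually
      (eventually_add_add_log_add_mul_rpow_le (log (4 / b)) hγ0 hγ1 hc),
    eventually_ge_atTop 2] with x hx hx2 d hd
  have hx0 : 0 < x := by linarith
  have hD := le_mul_exp_mul_log_rpow γ (by linarith : 1 ≤ x) (by positivity : 0 ≤ 2 * c + 1)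
  have hd0 : (0 : ℝ) < d := by linarith
  have hd2 : 2 ≤ d := by exact_mod_cast hx2.trans (hD.trans hd.le)
  have hlogd : log x + (2 * c + 1) * log x ^ γ ≤ log d := by
    rw [← log_exp ((2 * c + 1) * log x ^ γ), ← log_mul hx0.ne' (exp_pos _).ne']
    exact log_le_log (by positivity) hd.le
  have hlogd0 : 0 < log (d : ℝ) := log_pos (by linarith)
  calc 4 * x * log d = b * exp (log (4 / b) + log x + log (log d)) := by
        rw [exp_add, exp_add, exp_log (by positivity), exp_log hx0, exp_log hlogd0]
        field_simp
    _ ≤ b * exp (-c * log d ^ γ + log d) := by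
        gcongr b * exp ?_
        linarith [hx (log d) hlogd]
    _ = b * exp (-c * log d ^ γ) * d := by rw [exp_add, exp_log hd0, mul_assoc]
    _ ≤ p d * d := by gcongr; exact hp d hd2

theorem eventually_rpow_mul_exp_le_half_rpow {γ C K : ℝ} (t : ℝ) (hγ0 : 0 < γ) (hγ1 : γ < 1)
    (hC : 0 ≤ C) (hK : 0 ≤ K) :
    ∀ᶠ x in atTop, x ^ (-t) * exp (-(|t| * K + 2 * C + 1) * log x ^ γ) ≤
      (x * exp (K * log x ^ γ)) ^ (-t - C * log (x * exp (K * log x ^ γ)) ^ (γ - 1)) / 2 := by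
  filter_upwards [tendsto_log_atTop.eventually
      (eventually_add_mul_le_of_isLittleO (isLittleO_rpow_id_atTop hγ1) tendsto_id 0 K),
    tendsto_log_atTop.eventually_ge_atTop 1, eventually_gt_atTop 0] with x hKL hL1 hx0
  simp only [id, zero_add] at hKL
  set L := log x
  have hLγ : 1 ≤ L ^ γ := one_le_rpow hL1 hγ0.le
  have hlogD : log (x * exp (K * L ^ γ)) = L + K * L ^ γ := by
    rw [log_mul hx0.ne' (exp_pos _).ne', log_exp]
  have hℓ0 : 0 < L + K * L ^ γ := by positivity
  have hexponent : (L + K * L ^ γ) * (-t - C * (L + K * L ^ γ) ^ (γ - 1)) =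
      -t * L - t * (K * L ^ γ) - C * (L + K * L ^ γ) ^ γ := by
    rw [rpow_sub_one hℓ0.ne']
    field_simp
    ring
  have hℓγ : (L + K * L ^ γ) ^ γ ≤ 2 * L ^ γ :=
    rpow_le_two_mul_rpow hℓ0.le (by linarith) hγ0.le hγ1.le
  have ht : -(|t| * (K * L ^ γ)) ≤ -t * (K * L ^ γ) := by
    rw [← neg_mul]
    exact mul_le_mul_of_nonneg_right (neg_le_neg (le_abs_self t)) (by positivity)
  have htwo : 2 ≤ exp (L ^ γ) := by linarith [add_one_le_exp (L ^ γ)]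
  rw [rpow_def_of_pos hx0, rpow_def_of_pos (by positivity : 0 < x * exp (K * L ^ γ)), hlogD,
    le_div_iff₀ two_pos]
  calc exp (L * -t) * exp (-(|t| * K + 2 * C + 1) * L ^ γ) * 2
      ≤ exp (L * -t) * exp (-(|t| * K + 2 * C + 1) * L ^ γ) * exp (L ^ γ) := by gcongr
    _ = exp (-t * L - |t| * (K * L ^ γ) - 2 * C * L ^ γ) := by
        rw [← exp_add, ← exp_add]
        ring_nf
    _ ≤ exp ((L + K * L ^ γ) * (-t - C * (L + K * L ^ γ) ^ (γ - 1))) := by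
        rw [hexponent]
        gcongr exp ?_
        nlinarith [mul_le_mul_of_nonneg_left hℓγ hC]

theorem stmt17_general (τ γ C b c : ℝ) (hγ : 0 < γ ∧ γ < 1)
    (hC : 0 < C) (hb : 0 < b) (hc : 0 < c) (x₀ : ℝ)
    (μ : PMF ℕ)
    (hμ : ∀ x : ℝ, x₀ ≤ x →
      ENNReal.ofReal (x ^ (-(τ - 1) - C * (Real.log x) ^ (γ - 1))) ≤
        μ.toMeasure {y : ℕ | x < (y : ℝ)})
    (p : ℕ → ℝ) (hp1 : ∀ d : ℕ, p d ≤ 1)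
    (hplow : ∀ d : ℕ, 2 ≤ d → b * Real.exp (-c * (Real.log d) ^ γ) ≤ p d) :
    ∃ C' : ℝ, 0 < C' ∧ ∃ x₁ : ℝ, ∀ x : ℝ, x₁ ≤ x →
      ENNReal.ofReal (x ^ (-(τ - 1)) * Real.exp (-C' * (Real.log x) ^ γ)) ≤
        (μ.bind (fun d =>
          (PMF.binomial (Real.toNNReal (p d)) (Real.toNNReal_le_one.mpr (hp1 d)) d).map
            (Fin.val))).toMeasure {y : ℕ | x < (y : ℝ)} := by
  obtain ⟨hγ0, hγ1⟩ := hγ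
  refine ⟨|τ - 1| * (2 * c + 1) + 2 * C + 1, by positivity, ?_⟩
  rw [← eventually_atTop]
  filter_upwards [eventually_four_mul_mul_log_le hγ0 hγ1 hb hc.le hplow,
    eventually_rpow_mul_exp_le_half_rpow (τ - 1) hγ0 hγ1 hC.le (by positivity : 0 ≤ 2 * c + 1),
    eventually_ge_atTop x₀, eventually_ge_atTop (exp 1)] with x hbin hμD hx₀ hxe
  set D := x * exp ((2 * c + 1) * log x ^ γ)
  have hxD : x ≤ D :=
    le_mul_exp_mul_log_rpow γ (by linarith [add_one_le_exp 1]) (by positivity)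
  calc _ ≤ 2⁻¹ * ENNReal.ofReal (D ^ (-(τ - 1) - C * log D ^ (γ - 1))) := by
        refine (ENNReal.ofReal_le_ofReal hμD).trans_eq ?_
        rw [ENNReal.ofReal_div_of_pos two_pos, ENNReal.ofReal_ofNat, ENNReal.div_eq_inv_mul]
    _ ≤ 2⁻¹ * μ.toMeasure {d : ℕ | D < d} := by gcongr; exact hμ D (hx₀.trans hxD)
    _ ≤ _ := PMF.mul_toMeasure_le_toMeasure_bind _ _ .of_discrete .of_discrete fun d hd =>
        PMF.half_le_binomial_map_val_toMeasure_setOf_lt (hp1 d) hxe (hxD.trans hd.le) (hbin d hd)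

/-- Let `τ ∈ (2,3)`, `γ ∈ (0,1)`, `C > 0`, `b, c > 0` and `x₀ ≥ 2`. Let `μ` be
a probability mass function on `ℕ` such that `μ {y : y > x} ≥ x^(-(τ-1) - C(log x)^(γ-1))`
for all real `x ≥ x₀`. Let `p : ℕ → [0,1]` be nonincreasing with
`p d ≥ b·exp(-c (log d)^γ)` for all `d ≥ 2`. Let `ν := μ.bind (d ↦ Binomial(d, p d))` be the
mixture. Then there exist `C' > 0` and `x₁` such that for all real `x ≥ x₁`:
`ν {y : y > x} ≥ x^(-(τ-1))·exp(-C' (log x)^γ)`. -/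
theorem stmt17 (τ γ C b c : ℝ) (hτ : 2 < τ ∧ τ < 3) (hγ : 0 < γ ∧ γ < 1)
    (hC : 0 < C) (hb : 0 < b) (hc : 0 < c) (x₀ : ℝ) (hx₀ : 2 ≤ x₀)
    (μ : PMF ℕ)
    (hμ : ∀ x : ℝ, x₀ ≤ x →
      ENNReal.ofReal (x ^ (-(τ - 1) - C * (Real.log x) ^ (γ - 1))) ≤
        μ.toMeasure {y : ℕ | x < (y : ℝ)})
    (p : ℕ → ℝ) (hp0 : ∀ d : ℕ, 0 ≤ p d) (hp1 : ∀ d : ℕ, p d ≤ 1)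
    (hpmono : Antitone p)
    (hplow : ∀ d : ℕ, 2 ≤ d → b * Real.exp (-c * (Real.log d) ^ γ) ≤ p d) :
    ∃ C' : ℝ, 0 < C' ∧ ∃ x₁ : ℝ, ∀ x : ℝ, x₁ ≤ x →
      ENNReal.ofReal (x ^ (-(τ - 1)) * Real.exp (-C' * (Real.log x) ^ γ)) ≤
        (μ.bind (fun d =>
          (PMF.binomial (Real.toNNReal (p d)) (Real.toNNReal_le_one.mpr (hp1 d)) d).map
            (Fin.val))).toMeasure {y : ℕ | x < (y : ℝ)} :=
  stmt17_general τ γ C b c hγ hC hb hc x₀ μ hμ p hp1 hplow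
end
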